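/- Let G be a connected graph with κ(G) = δ(G) ≥ 1, n ≥ 3, and let S ⊆ V(G × Kₙ) with |S| = (n−1)δ(G) such that every fiber S_i = {u_i} × V(Kₙ) meets the complement (S_i − S ≠ ∅) and G × Kₙ − S has no isolated vertex. Define the quotient graph G* with vertices S_i' = S_i − S and S_i' adjacent to S_j' iff some edge of G × Kₙ − S joins S_i' to S_j'. Then G* is connected. -/

import Mathlib

open SimpleGraph

/-- The Kronecker (tensor) product of two simple graphs. -/
def tensorProd {α β : Type*} (G : SimpleGraph α) (H : SimpleGraph β) : SimpleGraph (α × β) where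
  Adj p q := G.Adj p.1 q.1 ∧ H.Adj p.2 q.2
  symm := ⟨fun p q h => ⟨G.symm.symm _ _ h.1, H.symm.symm _ _ h.2⟩⟩
  loopless := ⟨fun p h => G.loopless.irrefl p.1 h.1⟩

instance {α β : Type*} (G : SimpleGraph α) (H : SimpleGraph β)
    [DecidableRel G.Adj] [DecidableRel H.Adj] : DecidableRel (tensorProd G H).Adj :=
  fun _ _ => instDecidableAnd

/-- `S` is a separating set of `G`: deleting `S` leaves a single vertex or a
disconnected (possibly empty) graph. -/
def IsSeparating {V : Type*} (G : SimpleGraph V) (S : Set V) : Prop :=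
  Sᶜ.ncard = 1 ∨ ¬ (G.induce Sᶜ).Connected

/-- The vertex connectivity `κ(G)`: the minimum cardinality of a separating set. -/
noncomputable def kappa {V : Type*} [Fintype V] (G : SimpleGraph V) : ℕ :=
  sInf {k | ∃ S : Set V, IsSeparating G S ∧ S.ncard = k}

/-- A graph is super-connected (super-κ) if every minimum separating set is the
neighborhood of some vertex. -/
def SuperK {V : Type*} [Fintype V] (G : SimpleGraph V) : Prop :=
  ∀ S : Set V, IsSeparating G S → S.ncard = kappa G → ∃ v, S = G.neighborSet v

/-!
Call a vertex `u` of `G` *thin* if at most one vertex of its fiber survives the deletion of `S`.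
A thin fiber contains at least `n - 1` vertices of `S`, so there are at most `δ(G)` thin vertices.
Every edge `uw` of `G` with `w` not thin survives in the quotient, since a surviving vertex over
`u` has a neighbour among the (at least two) surviving vertices over `w`. So it suffices that a
graph containing all edges of `G` into the complement of a set `T` with `|T| ≤ δ(G) = κ(G)` is
connected: a thin vertex has a neighbour outside `T` by degree counting; and if `G - T` is
disconnected then `|T| = κ(G)`, so for `t ∈ T` the graph `G - (T \ {t})` is connected and every
component of `G - T` contains a neighbour of `t`.
-/

theorem Set.ncard_mul_le_ncard_of_le_ncard_fiber {α β : Type*} [Fintype α] [Fintype β]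
    {S : Set (α × β)} {T : Set α} {k : ℕ} (h : ∀ u ∈ T, k ≤ {v | (u, v) ∈ S}.ncard) :
    T.ncard * k ≤ S.ncard := by
  classical
  calc T.ncard * k
      ≤ ∑ u ∈ T.toFinset, {v | (u, v) ∈ S}.toFinset.card := by
        rw [Set.ncard_eq_toFinset_card', ← smul_eq_mul]
        refine Finset.card_nsmul_le_sum _ _ _ fun u hu => ?_
        rw [← Set.ncard_eq_toFinset_card']
        exact h u (Set.mem_toFinset.mp hu)
    _ = (T.toFinset.sigma fun u => {v | (u, v) ∈ S}.toFinset).card := (Finset.card_sigma _ _).symm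
    _ ≤ S.toFinset.card :=
        Finset.card_le_card_of_injOn (fun p => (p.1, p.2))
          (fun p hp => by simpa using (Finset.mem_sigma.mp hp).2)
          (fun p _ q _ hpq => by
            obtain ⟨h1, h2⟩ := Prod.mk.inj hpq
            exact Sigma.ext h1 (heq_of_eq h2))
    _ = S.ncard := (Set.ncard_eq_toFinset_card' S).symm

namespace SimpleGraph

variable {V : Type*} {G H : SimpleGraph V} {T : Set V}

theorem kappa_le_ncard [Fintype V] (hT : IsSeparating G T) : kappa G ≤ T.ncard :=
  Nat.sInf_le ⟨T, hT, rfl⟩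

theorem connected_induce_compl_of_ncard_lt_kappa [Fintype V] (hT : T.ncard < kappa G) :
    (G.induce Tᶜ).Connected := by
  by_contra hdisc
  exact (kappa_le_ncard (Or.inr hdisc)).not_gt hT

theorem exists_adj_notMem_of_ncard_le_minDegree [Fintype V] [DecidableRel G.Adj]
    (hT : T.ncard ≤ G.minDegree) {u : V} (hu : u ∈ T) : ∃ w, G.Adj u w ∧ w ∉ T := by
  by_contra! hN
  have hsub : G.neighborSet u ⊆ T \ {u} := fun w hw => ⟨hN w hw, (G.ne_of_adj hw).symm⟩
  have hdeg : G.degree u ≤ T.ncard - 1 := by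
    rw [← card_neighborSet_eq_degree, ← Nat.card_eq_fintype_card, Nat.card_coe_set_eq,
      ← Set.ncard_sdiff_singleton_of_mem hu]
    exact Set.ncard_le_ncard hsub
  have := G.minDegree_le_degree u
  have := (Set.ncard_pos (Set.toFinite T)).mpr ⟨u, hu⟩
  omega

theorem exists_adj_reachable_of_connected_induce_compl_sdiff {t : V} (ht : t ∈ T)
    (hconn : (G.induce (T \ {t})ᶜ).Connected) (z : ↥Tᶜ) :
    ∃ z' : ↥Tᶜ, G.Adj t z' ∧ (G.induce Tᶜ).Reachable z' z := by
  have hz : z.1 ∈ (T \ {t})ᶜ := fun h => z.2 h.1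
  have ht' : t ∈ (T \ {t})ᶜ := fun h => h.2 rfl
  obtain ⟨p⟩ := hconn.preconnected ⟨z, hz⟩ ⟨t, ht'⟩
  obtain ⟨d, -, ⟨ha, hreach⟩, hsnd⟩ := p.exists_boundary_dart
    {a | ∃ ha : a.1 ∉ T, (G.induce Tᶜ).Reachable ⟨a.1, ha⟩ z} ⟨z.2, .rfl⟩ fun h => h.1 ht
  have hb : d.snd.1 = t := by
    by_contra hne
    have hbT : d.snd.1 ∉ T := fun h => d.snd.2 ⟨h, hne⟩
    have hadj : (G.induce Tᶜ).Adj ⟨d.snd.1, hbT⟩ ⟨d.fst.1, ha⟩ := d.adj.symm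
    exact hsnd ⟨hbT, hadj.reachable.trans hreach⟩
  have hadj : G.Adj d.fst.1 d.snd.1 := d.adj
  rw [hb] at hadj
  exact ⟨⟨d.fst.1, ha⟩, hadj.symm, hreach⟩

theorem reachable_of_forall_adj_notMem [Fintype V] [DecidableRel G.Adj]
    (hk : kappa G = G.minDegree) (hδ : 1 ≤ G.minDegree) (hT : T.ncard ≤ G.minDegree)
    (hH : ∀ u w, G.Adj u w → w ∉ T → H.Adj u w) {w w' : V} (hw : w ∉ T) (hw' : w' ∉ T) :
    H.Reachable w w' := by
  let f : G.induce Tᶜ →g H := ⟨Subtype.val, fun {_ b} hab => hH _ _ hab b.2⟩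
  by_cases hC : (G.induce Tᶜ).Connected
  · exact (hC.preconnected ⟨w, hw⟩ ⟨w', hw'⟩).map f
  have hTk : kappa G ≤ T.ncard := kappa_le_ncard (Or.inr hC)
  obtain ⟨t, ht⟩ : T.Nonempty := (Set.ncard_pos (Set.toFinite T)).mp (by omega)
  have hconn : (G.induce (T \ {t})ᶜ).Connected := by
    refine connected_induce_compl_of_ncard_lt_kappa ?_
    rw [Set.ncard_sdiff_singleton_of_mem ht]
    omega
  obtain ⟨z, htz, hz⟩ := exists_adj_reachable_of_connected_induce_compl_sdiff ht hconn ⟨w, hw⟩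
  obtain ⟨z', htz', hz'⟩ :=
    exists_adj_reachable_of_connected_induce_compl_sdiff ht hconn ⟨w', hw'⟩
  exact (hz.map f).symm.trans <| (hH _ _ htz z.2).reachable.symm.trans <|
    (hH _ _ htz' z'.2).reachable.trans (hz'.map f)

theorem connected_of_forall_adj_notMem [Fintype V] [Nonempty V] [DecidableRel G.Adj]
    (hk : kappa G = G.minDegree) (hδ : 1 ≤ G.minDegree) (hT : T.ncard ≤ G.minDegree)
    (hH : ∀ u w, G.Adj u w → w ∉ T → H.Adj u w) : H.Connected := by
  have hout (u : V) : ∃ w ∉ T, H.Reachable u w := by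
    by_cases hu : u ∈ T
    · obtain ⟨w, huw, hw⟩ := exists_adj_notMem_of_ncard_le_minDegree hT hu
      exact ⟨w, hw, (hH u w huw hw).reachable⟩
    · exact ⟨u, hu, .rfl⟩
  refine (connected_iff H).mpr ⟨fun u u' => ?_, ‹_›⟩
  obtain ⟨w, hw, hu⟩ := hout u
  obtain ⟨w', hw', hu'⟩ := hout u'
  exact hu.trans ((reachable_of_forall_adj_notMem hk hδ hT hH hw hw').trans hu'.symm)

end SimpleGraph

theorem stmt16_general {α : Type*} [Fintype α] [Nonempty α] (G : SimpleGraph α) [DecidableRel G.Adj]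
    (hk : kappa G = G.minDegree) (hd : 1 ≤ G.minDegree)
    (n : ℕ) (hn : 3 ≤ n) (S : Set (α × Fin n))
    (hcard : S.ncard = (n - 1) * G.minDegree)
    (hfiber : ∀ u : α, ∃ v : Fin n, (u, v) ∉ S) :
    (SimpleGraph.fromRel (fun u u' : α =>
      ∃ x y : α × Fin n, x ∉ S ∧ y ∉ S ∧ x.1 = u ∧ y.1 = u' ∧
        (tensorProd G (⊤ : SimpleGraph (Fin n))).Adj x y)).Connected := by
  set T : Set α := {u | {v | (u, v) ∉ S}.ncard ≤ 1}
  have hT : T.ncard ≤ G.minDegree := by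
    have hthin (u : α) (hu : u ∈ T) : n - 1 ≤ {v | (u, v) ∈ S}.ncard := by
      have := Set.ncard_add_ncard_compl {v | (u, v) ∈ S}
      simp only [Nat.card_eq_fintype_card, Fintype.card_fin] at this
      have hu : {v | (u, v) ∉ S}.ncard ≤ 1 := hu
      change _ + {v | (u, v) ∉ S}.ncard = n at this
      omega
    have := Set.ncard_mul_le_ncard_of_le_ncard_fiber hthin
    rw [hcard, mul_comm] at this
    exact Nat.le_of_mul_le_mul_left this (by omega)
  refine connected_of_forall_adj_notMem hk hd hT fun u w huw hw => ?_
  obtain ⟨v, hv⟩ := hfiber u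
  obtain ⟨v', hv', hvv'⟩ := Set.exists_ne_of_one_lt_ncard (not_le.mp hw) v
  exact (fromRel_adj _ _ _).mpr
    ⟨huw.ne, .inl ⟨(u, v), (w, v'), hv, hv', rfl, rfl, huw, hvv'.symm⟩⟩

theorem stmt16 {α : Type*} [Fintype α] [Nonempty α] (G : SimpleGraph α) [DecidableRel G.Adj]
    (hconn : G.Connected) (hk : kappa G = G.minDegree) (hd : 1 ≤ G.minDegree)
    (n : ℕ) (hn : 3 ≤ n) (S : Set (α × Fin n))
    (hcard : S.ncard = (n - 1) * G.minDegree)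
    (hfiber : ∀ u : α, ∃ v : Fin n, (u, v) ∉ S)
    (hniso : ∀ x ∉ S, ∃ y ∉ S, (tensorProd G (⊤ : SimpleGraph (Fin n))).Adj x y) :
    (SimpleGraph.fromRel (fun u u' : α =>
      ∃ x y : α × Fin n, x ∉ S ∧ y ∉ S ∧ x.1 = u ∧ y.1 = u' ∧
        (tensorProd G (⊤ : SimpleGraph (Fin n))).Adj x y)).Connected :=
  stmt16_general G hk hd n hn S hcard hfiber
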